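/- Assume (t+σ)² + ν² > 0, and let Δt = (t+σ)(cosh ρ − 1) − τ + sinh ρ·√((t+σ)² + ν²) be the return time. Then the relative frequency of the returning and the emitted lightray, defined as the quotient f_r/f_e = η(n(Δt), v·x) / η(n(Δt), x), is given by f_r/f_e = √((t+σ)² + ν²) / ( cosh ρ · √((t+σ)² + ν²) + sinh ρ · (t+σ) ). -/

import Mathlib

open Matrix Real

noncomputable section

/-- The Minkowski inner product on ℝ³, of signature (−,+,+). -/
def eta (x y : Fin 3 → ℝ) : ℝ := -(x 0 * y 0) + x 1 * y 1 + x 2 * y 2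

/-- The Minkowski metric as a 3×3 matrix, η = diag(−1,1,1). -/
def etaMat : Matrix (Fin 3) (Fin 3) ℝ := Matrix.diagonal ![(-1 : ℝ), 1, 1]

/-- Membership in the proper orthochronous Lorentz group SO⁺(2,1):
vᵀηv = η, det v = 1, v₀₀ > 0. -/
def IsPOLorentz (v : Matrix (Fin 3) (Fin 3) ℝ) : Prop :=
  vᵀ * etaMat * v = etaMat ∧ v.det = 1 ∧ 0 < v 0 0

/-- The Minkowski cross product x∧y, the unique vector with
η(x∧y, z) = det(x,y,z) for all z. -/
def mcross (x y : Fin 3 → ℝ) : Fin 3 → ℝ :=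
  ![-(x 1 * y 2 - x 2 * y 1), x 2 * y 0 - x 0 * y 2, x 0 * y 1 - x 1 * y 0]

/-!
Put `y = v x`. Lorentz invariance gives `η(y,y) = -1`, and `x ∧ y` is `η`-orthogonal to `x` and
`y`, so writing `n(Δ) = (t+σ+τ+Δ) y - (t+σ) x + ν (x ∧ y)` both inner products only involve
`η(x,y) = -cosh ρ`. At the return time, by `cosh² ρ - sinh² ρ = 1`, they become `-sinh ρ · S` and
`-sinh ρ · (cosh ρ · S + sinh ρ · (t+σ))` with `S = √((t+σ)² + ν²)`, and `sinh ρ ≠ 0`.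
-/

lemma eta_eq_dotProduct (p q : Fin 3 → ℝ) : eta p q = p ⬝ᵥ (etaMat *ᵥ q) := by
  simp [eta, etaMat, dotProduct, Fin.sum_univ_three, mulVec_diagonal]

lemma eta_mulVec_mulVec {v : Matrix (Fin 3) (Fin 3) ℝ} (hv : vᵀ * etaMat * v = etaMat)
    (p q : Fin 3 → ℝ) : eta (v *ᵥ p) (v *ᵥ q) = eta p q := by
  rw [eta_eq_dotProduct, eta_eq_dotProduct, ← vecMul_transpose, ← dotProduct_mulVec,
    mulVec_mulVec, mulVec_mulVec, hv]

section Bilinear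

variable (p q r : Fin 3 → ℝ) (c : ℝ)

lemma eta_comm : eta p q = eta q p := by
  simp only [eta]; ring

lemma eta_add_left : eta (p + q) r = eta p r + eta q r := by
  simp only [eta, Pi.add_apply]; ring

lemma eta_sub_left : eta (p - q) r = eta p r - eta q r := by
  simp only [eta, Pi.sub_apply]; ring

lemma eta_smul_left : eta (c • p) q = c * eta p q := by
  simp only [eta, Pi.smul_apply, smul_eq_mul]; ring

lemma eta_mcross_fst : eta (mcross p q) p = 0 := by
  simp only [eta, mcross, cons_val_zero, cons_val_one, cons_val]; ring

lemma eta_mcross_snd : eta (mcross p q) q = 0 := by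
  simp only [eta, mcross, cons_val_zero, cons_val_one, cons_val]; ring

end Bilinear

section UnitTimelikePair

variable {x y : Fin 3 → ℝ} {c : ℝ} (α β ν : ℝ)

lemma eta_combination_right (hy : eta y y = -1) (hxy : eta x y = -c) :
    eta (α • y - β • x + ν • mcross x y) y = -α + β * c := by
  simp only [eta_add_left, eta_sub_left, eta_smul_left, eta_mcross_snd, hy, hxy]
  ring

lemma eta_combination_left (hx : eta x x = -1) (hxy : eta x y = -c) :
    eta (α • y - β • x + ν • mcross x y) x = -α * c + β := by
  simp only [eta_add_left, eta_sub_left, eta_smul_left, eta_mcross_fst, hx,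
    eta_comm y x, hxy]
  ring

end UnitTimelikePair

theorem relative_frequency_formula_general
    (x x₀ a : Fin 3 → ℝ) (v : Matrix (Fin 3) (Fin 3) ℝ)
    (hx : eta x x = -1)
    (hv : IsPOLorentz v)
    (ρ σ τ ν t : ℝ) (hρ : 0 < ρ)
    (hcosh : Real.cosh ρ = -eta x (v.mulVec x))
    (hdec : v.mulVec x₀ + a - x₀
      = σ • (v.mulVec x - x) + τ • v.mulVec x + ν • mcross x (v.mulVec x))
    (n : ℝ → Fin 3 → ℝ)
    (hn : ∀ Δ, n Δ = (t + Δ) • v.mulVec x - t • x + (v.mulVec x₀ + a - x₀))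
    (Δt : ℝ)
    (hΔt : Δt = (t + σ) * (Real.cosh ρ - 1) - τ
      + Real.sinh ρ * Real.sqrt ((t + σ) ^ 2 + ν ^ 2)) :
    eta (n Δt) (v.mulVec x) / eta (n Δt) x
      = Real.sqrt ((t + σ) ^ 2 + ν ^ 2)
        / (Real.cosh ρ * Real.sqrt ((t + σ) ^ 2 + ν ^ 2)
            + Real.sinh ρ * (t + σ)) := by
  set y := v *ᵥ x
  set S := √((t + σ) ^ 2 + ν ^ 2)
  have hy : eta y y = -1 := by rw [eta_mulVec_mulVec hv.1, hx]
  have hxy : eta x y = -cosh ρ := by rw [hcosh, neg_neg]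
  have hnΔt : n Δt = (t + σ + τ + Δt) • y - (t + σ) • x + ν • mcross x y := by
    rw [hn, hdec]; module
  have hsinh : -sinh ρ ≠ 0 := neg_ne_zero.2 (sinh_pos_iff.2 hρ).ne'
  rw [hnΔt, eta_combination_right _ _ _ hy hxy, eta_combination_left _ _ _ hx hxy]
  calc _ = -sinh ρ * S / (-sinh ρ * (cosh ρ * S + sinh ρ * (t + σ))) := by
        congr 1
        · rw [hΔt]; ring
        · rw [hΔt]; linear_combination -(t + σ) * cosh_sq_sub_sinh_sq ρ
    _ = _ := mul_div_mul_left _ _ hsinh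

/-- the relative frequency of returning and emitted lightray. -/
theorem relative_frequency_formula
    (x x₀ a : Fin 3 → ℝ) (v : Matrix (Fin 3) (Fin 3) ℝ)
    (hx : eta x x = -1) (hxfut : 0 < x 0)
    (hv : IsPOLorentz v) (hvx : v.mulVec x ≠ x)
    (ρ σ τ ν t : ℝ) (hρ : 0 < ρ)
    (hcosh : Real.cosh ρ = -eta x (v.mulVec x))
    (hdec : v.mulVec x₀ + a - x₀
      = σ • (v.mulVec x - x) + τ • v.mulVec x + ν • mcross x (v.mulVec x))
    (n : ℝ → Fin 3 → ℝ)
    (hn : ∀ Δ, n Δ = (t + Δ) • v.mulVec x - t • x + (v.mulVec x₀ + a - x₀))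
    (hpos : 0 < (t + σ) ^ 2 + ν ^ 2)
    (Δt : ℝ)
    (hΔt : Δt = (t + σ) * (Real.cosh ρ - 1) - τ
      + Real.sinh ρ * Real.sqrt ((t + σ) ^ 2 + ν ^ 2)) :
    eta (n Δt) (v.mulVec x) / eta (n Δt) x
      = Real.sqrt ((t + σ) ^ 2 + ν ^ 2)
        / (Real.cosh ρ * Real.sqrt ((t + σ) ^ 2 + ν ^ 2)
            + Real.sinh ρ * (t + σ)) :=
  relative_frequency_formula_general x x₀ a v hx hv ρ σ τ ν t hρ hcosh hdec n hn Δt hΔt
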